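/- arXiv:1712.05770 — 7 statements merged into one kernel-verified Lean document; each statement's English description precedes it below -/
import Mathlib

section
/- Suppose the bounded operator X : H_A → H_D is a solution of the Riccati equation XA − DX + XBX = C. Set Z_A := A + BX. Then for every z in the resolvent set of D the Schur complement factorizes as M_A(z) = W_A(z) ∘ (Z_A − z·I), where W_A(z) := I − B(D − z)^{-1}X. -/
/-!
Applying `X` to `Z_A − z` and using the Riccati equation gives the intertwining relation
`X (Z_A − z) = C + (D − z) X`, hence `(D − z)⁻¹ X (Z_A − z) = (D − z)⁻¹ C + X`.
Expanding `W_A(z) (Z_A − z) = (Z_A − z) − B (D − z)⁻¹ X (Z_A − z)` then leaves exactly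
`A − z − B (D − z)⁻¹ C`, the `B X` terms cancelling.
-/

open ContinuousLinearMap

theorem isUnit_sub_smul_one_of_mem_resolventSet {R A : Type*} [CommSemiring R] [Ring A]
    [Algebra R A] {a : A} {r : R} (h : r ∈ resolventSet R a) : IsUnit (a - r • (1 : A)) := by
  rw [← Algebra.algebraMap_eq_smul_one, IsUnit.sub_iff]
  exact h

section Riccati

variable {R M N : Type*} [CommRing R]
  [TopologicalSpace M] [AddCommGroup M] [IsTopologicalAddGroup M] [Module R M]
  [ContinuousConstSMul R M]
  [TopologicalSpace N] [AddCommGroup N] [IsTopologicalAddGroup N] [Module R N]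
  [ContinuousConstSMul R N]

theorem comp_sub_smul_one_eq_of_riccati {A : M →L[R] M} {B : N →L[R] M} {C : M →L[R] N}
    {D : N →L[R] N} {X : M →L[R] N} (hX : X ∘L A - D ∘L X + X ∘L B ∘L X = C) (z : R) :
    X ∘L (A + B ∘L X - z • 1) = C + (D - z • 1) ∘L X := by
  rw [← hX]
  simp only [comp_sub, comp_add, sub_comp, comp_smul, smul_comp, one_def, comp_id, id_comp]
  abel

end Riccati

theorem schur_complement_factorization_right_general {H_A H_D : Type*}
    [NormedAddCommGroup H_A] [InnerProductSpace ℂ H_A]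
    [NormedAddCommGroup H_D] [InnerProductSpace ℂ H_D]
    (A : H_A →L[ℂ] H_A) (B : H_D →L[ℂ] H_A) (C : H_A →L[ℂ] H_D) (D : H_D →L[ℂ] H_D)
    (X : H_A →L[ℂ] H_D)
    (hX : X.comp A - D.comp X + (X.comp B).comp X = C)
    (z : ℂ) (hz : z ∈ resolventSet ℂ D) :
    A - z • (1 : H_A →L[ℂ] H_A)
        - B.comp ((Ring.inverse (D - z • (1 : H_D →L[ℂ] H_D))).comp C) =
      ((1 : H_A →L[ℂ] H_A)
          - B.comp ((Ring.inverse (D - z • (1 : H_D →L[ℂ] H_D))).comp X)).comp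
        (A + B.comp X - z • (1 : H_A →L[ℂ] H_A)) := by
  have hinv : Ring.inverse (D - z • 1) ∘L (D - z • 1) = 1 :=
    Ring.inverse_mul_cancel _ (isUnit_sub_smul_one_of_mem_resolventSet hz)
  have hresolvent : Ring.inverse (D - z • 1) ∘L X ∘L (A + B ∘L X - z • 1) =
      Ring.inverse (D - z • 1) ∘L C + X := by
    rw [comp_sub_smul_one_eq_of_riccati hX, comp_add, ← comp_assoc, hinv, one_def, id_comp]
  rw [sub_comp, ← mul_def 1, one_mul, comp_assoc, comp_assoc, hresolvent, comp_add]
  abel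

/-- If `X` solves the Riccati equation `XA − DX + XBX = C` and `Z_A := A + BX`, then
for every `z` in the resolvent set of `D` the Schur complement
`M_A(z) = A − z − B(D − z)⁻¹C` factorizes as `M_A(z) = W_A(z)(Z_A − z)` with
`W_A(z) = I − B(D − z)⁻¹X`. -/
theorem schur_complement_factorization_right {H_A H_D : Type*}
    [NormedAddCommGroup H_A] [InnerProductSpace ℂ H_A] [CompleteSpace H_A]
    [NormedAddCommGroup H_D] [InnerProductSpace ℂ H_D] [CompleteSpace H_D]
    (A : H_A →L[ℂ] H_A) (B : H_D →L[ℂ] H_A) (C : H_A →L[ℂ] H_D) (D : H_D →L[ℂ] H_D)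
    (X : H_A →L[ℂ] H_D)
    (hX : X.comp A - D.comp X + (X.comp B).comp X = C)
    (z : ℂ) (hz : z ∈ resolventSet ℂ D) :
    A - z • (1 : H_A →L[ℂ] H_A)
        - B.comp ((Ring.inverse (D - z • (1 : H_D →L[ℂ] H_D))).comp C) =
      ((1 : H_A →L[ℂ] H_A)
          - B.comp ((Ring.inverse (D - z • (1 : H_D →L[ℂ] H_D))).comp X)).comp
        (A + B.comp X - z • (1 : H_A →L[ℂ] H_A)) :=
  schur_complement_factorization_right_general A B C D X hX z hz
end

section
/- Suppose the bounded operator Y : H_D → H_A is a solution of the Riccati equation YD − AY + YCY = B. Set Z̃_A := A − YC. Then for every z in the resolvent set of D the Schur complement admits the left factorization M_A(z) = (Z̃_A − z·I) ∘ W̃_A(z), where W̃_A(z) := I + Y(D − z)^{-1}C. -/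
/-!
Writing `R = (D - z)⁻¹`, we have `D R = 1 + z R`, so substituting the Riccati equation for `B`
gives `B R C = Y C + z Y R C - A Y R C + Y C Y R C`; expanding `(A - Y C - z)(1 + Y R C)` yields
the same terms.
-/

namespace ContinuousLinearMap

variable {𝕜 E F : Type*} [CommRing 𝕜]
  [AddCommGroup E] [Module 𝕜 E] [TopologicalSpace E] [IsTopologicalAddGroup E]
  [ContinuousConstSMul 𝕜 E]
  [AddCommGroup F] [Module 𝕜 F] [TopologicalSpace F] [IsTopologicalAddGroup F]
  [ContinuousConstSMul 𝕜 F]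

theorem comp_eq_one_add_smul_of_sub_smul_one_mul_eq_one {D R : F →L[𝕜] F} {z : 𝕜}
    (h : (D - z • 1) * R = 1) : D.comp R = 1 + z • R := by
  rw [sub_mul, smul_mul_assoc, one_mul, sub_eq_iff_eq_add'] at h
  exact h.trans (add_comm _ _)

theorem schur_complement_eq_comp_of_riccati (A : E →L[𝕜] E) (B : F →L[𝕜] E) (C : E →L[𝕜] F)
    (D : F →L[𝕜] F) (Y : F →L[𝕜] E) (hY : Y.comp D - A.comp Y + (Y.comp C).comp Y = B)
    {z : 𝕜} {R : F →L[𝕜] F} (hR : (D - z • 1) * R = 1) :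
    A - z • 1 - B.comp (R.comp C) = (A - Y.comp C - z • 1).comp (1 + Y.comp (R.comp C)) := by
  have hYDRC : Y.comp (D.comp (R.comp C)) = Y.comp C + z • Y.comp (R.comp C) := by
    rw [← comp_assoc D, comp_eq_one_add_smul_of_sub_smul_one_mul_eq_one hR, add_comp, smul_comp,
      one_def, id_comp, comp_add, comp_smul]
  subst hY
  simp only [sub_comp, add_comp, comp_add, smul_comp, comp_assoc, one_def, id_comp, comp_id,
    hYDRC]
  abel

end ContinuousLinearMap

theorem schur_complement_factorization_left_general {H_A H_D : Type*}
    [NormedAddCommGroup H_A] [InnerProductSpace ℂ H_A]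
    [NormedAddCommGroup H_D] [InnerProductSpace ℂ H_D]
    (A : H_A →L[ℂ] H_A) (B : H_D →L[ℂ] H_A) (C : H_A →L[ℂ] H_D) (D : H_D →L[ℂ] H_D)
    (Y : H_D →L[ℂ] H_A)
    (hY : Y.comp D - A.comp Y + (Y.comp C).comp Y = B)
    (z : ℂ) (hz : z ∈ resolventSet ℂ D) :
    A - z • (1 : H_A →L[ℂ] H_A)
        - B.comp ((Ring.inverse (D - z • (1 : H_D →L[ℂ] H_D))).comp C) =
      (A - Y.comp C - z • (1 : H_A →L[ℂ] H_A)).comp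
        ((1 : H_A →L[ℂ] H_A)
          + Y.comp ((Ring.inverse (D - z • (1 : H_D →L[ℂ] H_D))).comp C)) := by
  have hunit : IsUnit (D - z • (1 : H_D →L[ℂ] H_D)) := by
    rw [spectrum.mem_resolventSet_iff, Algebra.algebraMap_eq_smul_one] at hz
    simpa using hz.neg
  exact ContinuousLinearMap.schur_complement_eq_comp_of_riccati A B C D Y hY
    (Ring.mul_inverse_cancel _ hunit)

/-- If `Y` solves the dual Riccati equation `YD − AY + YCY = B` and `Z̃_A := A − YC`, then
for every `z` in the resolvent set of `D` the Schur complement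
`M_A(z) = A − z − B(D − z)⁻¹C` admits the left factorization
`M_A(z) = (Z̃_A − z)·W̃_A(z)` with `W̃_A(z) = I + Y(D − z)⁻¹C`. -/
theorem schur_complement_factorization_left {H_A H_D : Type*}
    [NormedAddCommGroup H_A] [InnerProductSpace ℂ H_A] [CompleteSpace H_A]
    [NormedAddCommGroup H_D] [InnerProductSpace ℂ H_D] [CompleteSpace H_D]
    (A : H_A →L[ℂ] H_A) (B : H_D →L[ℂ] H_A) (C : H_A →L[ℂ] H_D) (D : H_D →L[ℂ] H_D)
    (Y : H_D →L[ℂ] H_A)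
    (hY : Y.comp D - A.comp Y + (Y.comp C).comp Y = B)
    (z : ℂ) (hz : z ∈ resolventSet ℂ D) :
    A - z • (1 : H_A →L[ℂ] H_A)
        - B.comp ((Ring.inverse (D - z • (1 : H_D →L[ℂ] H_D))).comp C) =
      (A - Y.comp C - z • (1 : H_A →L[ℂ] H_A)).comp
        ((1 : H_A →L[ℂ] H_A)
          + Y.comp ((Ring.inverse (D - z • (1 : H_D →L[ℂ] H_D))).comp C)) :=
  schur_complement_factorization_left_general A B C D Y hY z hz
end

section
/- Suppose X : H_A → H_D is a bounded solution of XA − DX + XBX = C and Y : H_D → H_A is a bounded solution of YD − AY + YCY = B. Let Q be the bounded operator on H_A × H_D defined by Q(x, y) = (Yy, Xx), and let Z be the block-diagonal operator Z(x, y) = ((A + BX)x, (D + CY)y). Then L ∘ (I + Q) = (I + Q) ∘ Z. If moreover 1 does not belong to the spectrum of XY and 1 does not belong to the spectrum of YX, then I + Q is boundedly invertible and L = (I + Q) ∘ Z ∘ (I + Q)^{-1}. -/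
/-!
The Riccati equations for `X` and `Y` are exactly the off-diagonal entries of the block identity
`L (I + Q) = (I + Q) Z`. Since `I + Q` and `I - Q` commute and
`(I + Q) (I - Q) = I - Q² = diag(I - YX, I - XY)`, invertibility of `I - XY` and `I - YX` makes
`I + Q` invertible, and `L` is then the conjugate of `Z`.
-/

theorem isUnit_one_add_of_isUnit_one_sub_mul_self {R : Type*} [Ring R] {a : R}
    (h : IsUnit (1 - a * a)) : IsUnit (1 + a) := by
  have hfactor : (1 + a) * (1 - a) = 1 - a * a := by noncomm_ring
  have hcomm : Commute (1 + a) (1 - a) :=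
    (Commute.one_right _).sub_right ((Commute.one_left a).add_left (Commute.refl a))
  exact (hcomm.isUnit_mul_iff.mp (hfactor ▸ h)).1

namespace ContinuousLinearMap

variable {R : Type*} [Ring R]
  {E : Type*} [TopologicalSpace E] [AddCommGroup E] [IsTopologicalAddGroup E] [Module R E]
  {F : Type*} [TopologicalSpace F] [AddCommGroup F] [IsTopologicalAddGroup F] [Module R F]

theorem isUnit_prodMap {f : E →L[R] E} {g : F →L[R] F} (hf : IsUnit f) (hg : IsUnit g) :
    IsUnit (f.prodMap g) := by
  obtain ⟨u, rfl⟩ := hf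
  obtain ⟨v, rfl⟩ := hg
  refine ⟨⟨(u : E →L[R] E).prodMap v, (↑u⁻¹ : E →L[R] E).prodMap ↑v⁻¹, ?_, ?_⟩, rfl⟩ <;>
    refine ContinuousLinearMap.ext fun ⟨x, y⟩ => ?_
  · exact Prod.ext (DFunLike.congr_fun u.mul_inv x) (DFunLike.congr_fun v.mul_inv y)
  · exact Prod.ext (DFunLike.congr_fun u.inv_mul x) (DFunLike.congr_fun v.inv_mul y)

theorem one_sub_mul_self_eq_prodMap_of_swap {X : E →L[R] F} {Y : F →L[R] E}
    {Q : E × F →L[R] E × F} (hQ : ∀ x y, Q (x, y) = (Y y, X x)) :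
    1 - Q * Q = (1 - Y.comp X).prodMap (1 - X.comp Y) := by
  refine ContinuousLinearMap.ext fun ⟨x, y⟩ => ?_
  simp [hQ]

theorem comp_one_add_eq_of_riccati {A : E →L[R] E} {B : F →L[R] E} {C : E →L[R] F}
    {D : F →L[R] F} {L : E × F →L[R] E × F} (hL : ∀ x y, L (x, y) = (A x + B y, C x + D y))
    {X : E →L[R] F} {Y : F →L[R] E}
    (hX : X.comp A - D.comp X + (X.comp B).comp X = C)
    (hY : Y.comp D - A.comp Y + (Y.comp C).comp Y = B)
    {Q Z : E × F →L[R] E × F} (hQ : ∀ x y, Q (x, y) = (Y y, X x))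
    (hZ : ∀ x y, Z (x, y) = ((A + B.comp X) x, (D + C.comp Y) y)) :
    L.comp (1 + Q) = (1 + Q).comp Z := by
  have hXx (x : E) : X (A x) - D (X x) + X (B (X x)) = C x := by simpa using DFunLike.congr_fun hX x
  have hYy (y : F) : Y (D y) - A (Y y) + Y (C (Y y)) = B y := by simpa using DFunLike.congr_fun hY y
  refine ContinuousLinearMap.ext fun ⟨x, y⟩ => ?_
  simp only [comp_apply, add_apply, one_apply_eq_self, hL, hQ, hZ, Prod.mk_add_mk, map_add,
    Prod.mk.injEq]
  exact ⟨by rw [← hYy y]; abel, by rw [← hXx x]; abel⟩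

end ContinuousLinearMap

open ContinuousLinearMap in
theorem block_diagonalization_plus_general {H_A H_D : Type*}
    [NormedAddCommGroup H_A] [InnerProductSpace ℂ H_A]
    [NormedAddCommGroup H_D] [InnerProductSpace ℂ H_D]
    (A : H_A →L[ℂ] H_A) (B : H_D →L[ℂ] H_A) (C : H_A →L[ℂ] H_D) (D : H_D →L[ℂ] H_D)
    (L : (H_A × H_D) →L[ℂ] (H_A × H_D))
    (hL : ∀ (x : H_A) (y : H_D), L (x, y) = (A x + B y, C x + D y))
    (X : H_A →L[ℂ] H_D) (Y : H_D →L[ℂ] H_A)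
    (hX : X.comp A - D.comp X + (X.comp B).comp X = C)
    (hY : Y.comp D - A.comp Y + (Y.comp C).comp Y = B)
    (Q Z : (H_A × H_D) →L[ℂ] (H_A × H_D))
    (hQ : ∀ (x : H_A) (y : H_D), Q (x, y) = (Y y, X x))
    (hZ : ∀ (x : H_A) (y : H_D), Z (x, y) = ((A + B.comp X) x, (D + C.comp Y) y)) :
    L.comp (1 + Q) = (1 + Q).comp Z ∧
      ((1 : ℂ) ∉ spectrum ℂ (X.comp Y) → (1 : ℂ) ∉ spectrum ℂ (Y.comp X) →
        IsUnit (1 + Q) ∧ L = ((1 + Q) * Z) * Ring.inverse (1 + Q)) := by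
  have hintertwine : L * (1 + Q) = (1 + Q) * Z := comp_one_add_eq_of_riccati hL hX hY hQ hZ
  refine ⟨hintertwine, fun hXY hYX => ?_⟩
  have hunit : IsUnit (1 + Q) := by
    apply isUnit_one_add_of_isUnit_one_sub_mul_self
    rw [one_sub_mul_self_eq_prodMap_of_swap hQ]
    exact isUnit_prodMap (by simpa using spectrum.notMem_iff.mp hYX)
      (by simpa using spectrum.notMem_iff.mp hXY)
  refine ⟨hunit, ?_⟩
  rw [← hintertwine, Ring.mul_inverse_cancel_right _ _ hunit]

/-- If `X` and `Y` solve the pair of Riccati equations associated with the block operator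
matrix `L`, and `Q(x,y) = (Yy, Xx)`, `Z(x,y) = ((A+BX)x, (D+CY)y)`, then
`L(I+Q) = (I+Q)Z`; if moreover `1 ∉ σ(XY)` and `1 ∉ σ(YX)`, then `I+Q` is boundedly
invertible and `L = (I+Q) Z (I+Q)⁻¹`. -/
theorem block_diagonalization_plus {H_A H_D : Type*}
    [NormedAddCommGroup H_A] [InnerProductSpace ℂ H_A] [CompleteSpace H_A]
    [NormedAddCommGroup H_D] [InnerProductSpace ℂ H_D] [CompleteSpace H_D]
    (A : H_A →L[ℂ] H_A) (B : H_D →L[ℂ] H_A) (C : H_A →L[ℂ] H_D) (D : H_D →L[ℂ] H_D)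
    (L : (H_A × H_D) →L[ℂ] (H_A × H_D))
    (hL : ∀ (x : H_A) (y : H_D), L (x, y) = (A x + B y, C x + D y))
    (X : H_A →L[ℂ] H_D) (Y : H_D →L[ℂ] H_A)
    (hX : X.comp A - D.comp X + (X.comp B).comp X = C)
    (hY : Y.comp D - A.comp Y + (Y.comp C).comp Y = B)
    (Q Z : (H_A × H_D) →L[ℂ] (H_A × H_D))
    (hQ : ∀ (x : H_A) (y : H_D), Q (x, y) = (Y y, X x))
    (hZ : ∀ (x : H_A) (y : H_D), Z (x, y) = ((A + B.comp X) x, (D + C.comp Y) y)) :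
    L.comp (1 + Q) = (1 + Q).comp Z ∧
      ((1 : ℂ) ∉ spectrum ℂ (X.comp Y) → (1 : ℂ) ∉ spectrum ℂ (Y.comp X) →
        IsUnit (1 + Q) ∧ L = ((1 + Q) * Z) * Ring.inverse (1 + Q)) :=
  block_diagonalization_plus_general A B C D L hL X Y hX hY Q Z hQ hZ
end

section
/- Suppose X : H_A → H_D is a bounded solution of XA − DX + XBX = C and Y : H_D → H_A is a bounded solution of YD − AY + YCY = B. Then (I − YX) ∘ (A + BX) = (A − YC) ∘ (I − YX) as operators on H_A. In particular, if 1 does not belong to the spectrum of YX, then A − YC = (I − YX)(A + BX)(I − YX)^{-1}, so the operators A + BX and A − YC are similar. -/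
/-!
The difference `(I − YX)(A + BX) − (A − YC)(I − YX)` is the residual of the `Y`-equation
composed with `X` plus `Y` composed with the residual of the `X`-equation, so it vanishes.
-/

open ContinuousLinearMap

section Riccati

variable {R M N : Type*} [Ring R]
  [TopologicalSpace M] [AddCommGroup M] [Module R M] [IsTopologicalAddGroup M]
  [TopologicalSpace N] [AddCommGroup N] [Module R N] [IsTopologicalAddGroup N]
  (A : M →L[R] M) (B : N →L[R] M) (C : M →L[R] N) (D : N →L[R] N)
  (X : M →L[R] N) (Y : N →L[R] M)

theorem one_sub_comp_add_comp_sub_sub_comp_one_sub :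
    (1 - Y.comp X).comp (A + B.comp X) - (A - Y.comp C).comp (1 - Y.comp X) =
      (B - (Y.comp D - A.comp Y + (Y.comp C).comp Y)).comp X +
        Y.comp (C - (X.comp A - D.comp X + (X.comp B).comp X)) := by
  simp only [comp_sub, comp_add, sub_comp, add_comp, comp_assoc, one_def, comp_id, id_comp]
  abel

theorem one_sub_comp_add_comp_eq_of_riccati
    (hX : X.comp A - D.comp X + (X.comp B).comp X = C)
    (hY : Y.comp D - A.comp Y + (Y.comp C).comp Y = B) :
    (1 - Y.comp X).comp (A + B.comp X) = (A - Y.comp C).comp (1 - Y.comp X) := by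
  rw [← sub_eq_zero, one_sub_comp_add_comp_sub_sub_comp_one_sub A B C D, hX, hY]
  simp

end Riccati

theorem eq_mul_mul_inverse_of_mul_eq_mul {M₀ : Type*} [MonoidWithZero M₀] {u a b : M₀}
    (hu : IsUnit u) (h : u * a = b * u) : b = u * a * Ring.inverse u := by
  rw [h, mul_assoc, Ring.mul_inverse_cancel u hu, mul_one]

theorem similarity_ZA_general {H_A H_D : Type*}
    [NormedAddCommGroup H_A] [InnerProductSpace ℂ H_A]
    [NormedAddCommGroup H_D] [InnerProductSpace ℂ H_D]
    (A : H_A →L[ℂ] H_A) (B : H_D →L[ℂ] H_A) (C : H_A →L[ℂ] H_D) (D : H_D →L[ℂ] H_D)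
    (X : H_A →L[ℂ] H_D) (Y : H_D →L[ℂ] H_A)
    (hX : X.comp A - D.comp X + (X.comp B).comp X = C)
    (hY : Y.comp D - A.comp Y + (Y.comp C).comp Y = B) :
    ((1 : H_A →L[ℂ] H_A) - Y.comp X).comp (A + B.comp X) =
        (A - Y.comp C).comp ((1 : H_A →L[ℂ] H_A) - Y.comp X) ∧
      ((1 : ℂ) ∉ spectrum ℂ (Y.comp X) →
        A - Y.comp C =
          (((1 : H_A →L[ℂ] H_A) - Y.comp X) * (A + B.comp X)) *
            Ring.inverse ((1 : H_A →L[ℂ] H_A) - Y.comp X)) := by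
  have intertwine := one_sub_comp_add_comp_eq_of_riccati A B C D X Y hX hY
  refine ⟨intertwine, fun h1 => ?_⟩
  have hu : IsUnit ((1 : H_A →L[ℂ] H_A) - Y.comp X) := by
    simpa using spectrum.notMem_iff.mp h1
  exact eq_mul_mul_inverse_of_mul_eq_mul hu intertwine

/-- If `X` and `Y` solve the pair of Riccati equations, then
`(I − YX)(A + BX) = (A − YC)(I − YX)`; in particular, if `1 ∉ σ(YX)` then
`A − YC = (I − YX)(A + BX)(I − YX)⁻¹`, i.e. `A + BX` and `A − YC` are similar. -/
theorem similarity_ZA {H_A H_D : Type*}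
    [NormedAddCommGroup H_A] [InnerProductSpace ℂ H_A] [CompleteSpace H_A]
    [NormedAddCommGroup H_D] [InnerProductSpace ℂ H_D] [CompleteSpace H_D]
    (A : H_A →L[ℂ] H_A) (B : H_D →L[ℂ] H_A) (C : H_A →L[ℂ] H_D) (D : H_D →L[ℂ] H_D)
    (X : H_A →L[ℂ] H_D) (Y : H_D →L[ℂ] H_A)
    (hX : X.comp A - D.comp X + (X.comp B).comp X = C)
    (hY : Y.comp D - A.comp Y + (Y.comp C).comp Y = B) :
    ((1 : H_A →L[ℂ] H_A) - Y.comp X).comp (A + B.comp X) =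
        (A - Y.comp C).comp ((1 : H_A →L[ℂ] H_A) - Y.comp X) ∧
      ((1 : ℂ) ∉ spectrum ℂ (Y.comp X) →
        A - Y.comp C =
          (((1 : H_A →L[ℂ] H_A) - Y.comp X) * (A + B.comp X)) *
            Ring.inverse ((1 : H_A →L[ℂ] H_A) - Y.comp X)) :=
  similarity_ZA_general A B C D X Y hX hY
end

section
/- Suppose X : H_A → H_D is a bounded solution of XA − DX + XBX = C and Y : H_D → H_A is a bounded solution of YD − AY + YCY = B, and that 1 does not belong to the spectrum of XY and 1 does not belong to the spectrum of YX. Then the spectrum of the block operator matrix L equals the union of the spectrum of A + BX (an operator on H_A) and the spectrum of D + CY (an operator on H_D). -/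
/-!
With `S = [[1, Y], [X, 1]]`, the two Riccati equations say exactly that
`L S = S (diag (A + BX, D + CY))`. The operator `S` is invertible because its Schur complement
`1 - XY` is: if `G = (1 - XY)⁻¹`, then `S⁻¹ = [[1 + YGX, -YG], [-GX, G]]`. Hence `L` is similar to
the block diagonal operator, whose spectrum is the union of the spectra of its diagonal blocks.
-/

lemma spectrum_eq_of_mul_eq_mul_of_isUnit {R A : Type*} [CommSemiring R] [Ring A] [Algebra R A]
    {a b s : A} (hs : IsUnit s) (h : a * s = s * b) : spectrum R a = spectrum R b := by
  obtain ⟨u, rfl⟩ := hs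
  rw [← spectrum.units_conjugate (u := u) (a := b), ← h, mul_assoc, u.mul_inv, mul_one]

namespace ContinuousLinearMap

section Semiring

variable {R E F : Type*} [Semiring R]
  [TopologicalSpace E] [AddCommMonoid E] [Module R E] [ContinuousAdd E]
  [TopologicalSpace F] [AddCommMonoid F] [Module R F] [ContinuousAdd F]

def blockOp (A : E →L[R] E) (B : F →L[R] E) (C : E →L[R] F) (D : F →L[R] F) :
    E × F →L[R] E × F :=
  (A.coprod B).prod (C.coprod D)

@[simp]
lemma blockOp_apply (A : E →L[R] E) (B : F →L[R] E) (C : E →L[R] F) (D : F →L[R] F)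
    (p : E × F) : blockOp A B C D p = (A p.1 + B p.2, C p.1 + D p.2) := rfl

lemma blockOp_mul_blockOp (A A' : E →L[R] E) (B B' : F →L[R] E) (C C' : E →L[R] F)
    (D D' : F →L[R] F) :
    blockOp A B C D * blockOp A' B' C' D' =
      blockOp (A ∘L A' + B ∘L C') (A ∘L B' + B ∘L D') (C ∘L A' + D ∘L C')
        (C ∘L B' + D ∘L D') := by
  ext p <;> simp

lemma blockOp_zero_zero (A : E →L[R] E) (D : F →L[R] F) : blockOp A 0 0 D = A.prodMap D := by
  ext <;> simp

lemma isUnit_prodMap_iff {P : E →L[R] E} {Q : F →L[R] F} :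
    IsUnit (P.prodMap Q) ↔ IsUnit P ∧ IsUnit Q := by
  constructor
  · intro h
    obtain ⟨T, hT, hT'⟩ := isUnit_iff_exists.1 h
    have hr : ∀ p, (P (T p).1, Q (T p).2) = p := fun p => congr($hT p)
    have hl : ∀ a b, T (P a, Q b) = (a, b) := fun a b => congr($hT' (a, b))
    refine ⟨isUnit_iff_exists.2 ⟨fst R E F ∘L T ∘L inl R E F, ?_, ?_⟩,
      isUnit_iff_exists.2 ⟨snd R E F ∘L T ∘L inr R E F, ?_, ?_⟩⟩
    · ext a; simpa using congr($(hr (a, 0)).1)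
    · ext a; simpa using congr($(hl a 0).1)
    · ext b; simpa using congr($(hr (0, b)).2)
    · ext b; simpa using congr($(hl 0 b).2)
  · rintro ⟨hP, hQ⟩
    obtain ⟨P', hPP', hP'P⟩ := isUnit_iff_exists.1 hP
    obtain ⟨Q', hQQ', hQ'Q⟩ := isUnit_iff_exists.1 hQ
    refine isUnit_iff_exists.2 ⟨P'.prodMap Q', ?_, ?_⟩
    · exact ext fun p => Prod.ext congr($hPP' p.1) congr($hQQ' p.2)
    · exact ext fun p => Prod.ext congr($hP'P p.1) congr($hQ'Q p.2)

end Semiring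

section Ring

variable {R E F : Type*} [Ring R]
  [TopologicalSpace E] [AddCommGroup E] [Module R E] [IsTopologicalAddGroup E]
  [TopologicalSpace F] [AddCommGroup F] [Module R F] [IsTopologicalAddGroup F]

lemma isUnit_blockOp_one_of_isUnit_one_sub_comp {X : E →L[R] F} {Y : F →L[R] E}
    (h : IsUnit (1 - X ∘L Y)) : IsUnit (blockOp 1 Y X 1) := by
  obtain ⟨G, hG, hG'⟩ := isUnit_iff_exists.1 h
  have hGr : ∀ v, G v - X (Y (G v)) = v := fun v => by simpa using congr($hG v)
  have hGl : ∀ v, G v - G (X (Y v)) = v := fun v => by simpa using congr($hG' v)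
  refine isUnit_iff_exists.2 ⟨blockOp (1 + Y ∘L G ∘L X) (-(Y ∘L G)) (-(G ∘L X)) G, ?_, ?_⟩
  · ext a <;> simp
    · linear_combination (norm := abel) -hGr (X a)
    · linear_combination (norm := abel) hGr a
  · ext a <;> simp
    · have hYGl : Y (G a) - Y (G (X (Y a))) = Y a := by rw [← map_sub, hGl]
      linear_combination (norm := abel) -hYGl
    · linear_combination (norm := abel) hGl a

lemma blockOp_mul_eq_mul_prodMap_of_riccati {A : E →L[R] E} {B : F →L[R] E} {C : E →L[R] F}
    {D : F →L[R] F} {X : E →L[R] F} {Y : F →L[R] E}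
    (hX : X ∘L A - D ∘L X + X ∘L B ∘L X = C) (hY : Y ∘L D - A ∘L Y + Y ∘L C ∘L Y = B) :
    blockOp A B C D * blockOp 1 Y X 1 = blockOp 1 Y X 1 * (A + B ∘L X).prodMap (D + C ∘L Y) := by
  rw [← blockOp_zero_zero, blockOp_mul_blockOp, blockOp_mul_blockOp]
  congr 1
  · simp [one_def]
  · rw [← hY]; simp [one_def, comp_add]; abel
  · rw [← hX]; simp [one_def, comp_add]; abel
  · simp [one_def, add_comm]

end Ring

section CommRing

variable {R E F : Type*} [CommRing R]
  [TopologicalSpace E] [AddCommGroup E] [Module R E] [IsTopologicalAddGroup E]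
  [ContinuousConstSMul R E]
  [TopologicalSpace F] [AddCommGroup F] [Module R F] [IsTopologicalAddGroup F]
  [ContinuousConstSMul R F]

lemma spectrum_prodMap (P : E →L[R] E) (Q : F →L[R] F) :
    spectrum R (P.prodMap Q) = spectrum R P ∪ spectrum R Q := by
  ext μ
  have hsub : algebraMap R _ μ - P.prodMap Q =
      (algebraMap R _ μ - P).prodMap (algebraMap R _ μ - Q) := by
    ext <;> simp
  simp only [Set.mem_union, spectrum.mem_iff, hsub, isUnit_prodMap_iff, not_and_or]

end CommRing

end ContinuousLinearMap

open ContinuousLinearMap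

theorem spectrum_block_matrix_union_general {H_A H_D : Type*}
    [NormedAddCommGroup H_A] [InnerProductSpace ℂ H_A]
    [NormedAddCommGroup H_D] [InnerProductSpace ℂ H_D]
    (A : H_A →L[ℂ] H_A) (B : H_D →L[ℂ] H_A) (C : H_A →L[ℂ] H_D) (D : H_D →L[ℂ] H_D)
    (L : (H_A × H_D) →L[ℂ] (H_A × H_D))
    (hL : ∀ (x : H_A) (y : H_D), L (x, y) = (A x + B y, C x + D y))
    (X : H_A →L[ℂ] H_D) (Y : H_D →L[ℂ] H_A)
    (hX : X.comp A - D.comp X + (X.comp B).comp X = C)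
    (hY : Y.comp D - A.comp Y + (Y.comp C).comp Y = B)
    (hXY : (1 : ℂ) ∉ spectrum ℂ (X.comp Y)) :
    spectrum ℂ L = spectrum ℂ (A + B.comp X) ∪ spectrum ℂ (D + C.comp Y) := by
  have hL' : L = blockOp A B C D := ext fun p => hL p.1 p.2
  rw [spectrum.notMem_iff, map_one] at hXY
  rw [hL', spectrum_eq_of_mul_eq_mul_of_isUnit (isUnit_blockOp_one_of_isUnit_one_sub_comp hXY)
    (blockOp_mul_eq_mul_prodMap_of_riccati hX hY), spectrum_prodMap]

/-- If `X` and `Y` solve the pair of Riccati equations associated with the block operator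
matrix `L` and `1 ∉ σ(XY)`, `1 ∉ σ(YX)`, then the spectrum of `L` is the union of the
spectra of `A + BX` and `D + CY`. -/
theorem spectrum_block_matrix_union {H_A H_D : Type*}
    [NormedAddCommGroup H_A] [InnerProductSpace ℂ H_A] [CompleteSpace H_A]
    [NormedAddCommGroup H_D] [InnerProductSpace ℂ H_D] [CompleteSpace H_D]
    (A : H_A →L[ℂ] H_A) (B : H_D →L[ℂ] H_A) (C : H_A →L[ℂ] H_D) (D : H_D →L[ℂ] H_D)
    (L : (H_A × H_D) →L[ℂ] (H_A × H_D))
    (hL : ∀ (x : H_A) (y : H_D), L (x, y) = (A x + B y, C x + D y))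
    (X : H_A →L[ℂ] H_D) (Y : H_D →L[ℂ] H_A)
    (hX : X.comp A - D.comp X + (X.comp B).comp X = C)
    (hY : Y.comp D - A.comp Y + (Y.comp C).comp Y = B)
    (hXY : (1 : ℂ) ∉ spectrum ℂ (X.comp Y))
    (hYX : (1 : ℂ) ∉ spectrum ℂ (Y.comp X)) :
    spectrum ℂ L = spectrum ℂ (A + B.comp X) ∪ spectrum ℂ (D + C.comp Y) :=
  spectrum_block_matrix_union_general A B C D L hL X Y hX hY hXY
end

section
/- There exists a bounded operator T on H with ‖T‖ ≤ r := d/2 − √(d²/4 − V) such that, setting Z := A + T, the operator Z − γ(t)·I is boundedly invertible for every t ∈ [0,1] and Z = A − ∫₀¹ F(γ(t)) ∘ (Z − γ(t))^{-1} γ'(t) dt (a Bochner integral of operator-valued functions). Moreover, T is unique in the following sense: if T' is any bounded operator with ‖T'‖ ≤ d − √V such that A + T' − γ(t) is boundedly invertible for all t ∈ [0,1] and A + T' = A − ∫₀¹ F(γ(t)) (A + T' − γ(t))^{-1} γ'(t) dt, then T' = T. -/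
/-!
Writing `Z = A + T`, the equation says that `T` is a fixed point of
`Φ T = -∫₀¹ γ'(t) F(γ t) (A + T - γ t)⁻¹ dt` (`rootMap` below). Since `A` is normal, `‖(A - γ t)⁻¹‖ ≤ 1/d`, and the
perturbation `A + T` keeps `‖(A + T - γ t)⁻¹‖ ≤ 1/(d - ‖T‖)`. Hence `Φ` maps the ball of radius `r`
into itself once `V ≤ r (d - r)`, and by the resolvent identity it is Lipschitz there with constant
`V / (d - r)² < 1` when `2 r < d`; `r = d/2 - √(d²/4 - V)` is the smaller root of `r (d - r) = V`,
and Banach's fixed point theorem gives `T`. For another fixed point `T'` the same estimate reads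
`‖T' - T‖ ≤ V / ((d - ‖T‖) (d - ‖T'‖)) ‖T' - T‖`, a contraction as long as `d - ‖T'‖ ≥ √V`.
-/

open Set MeasureTheory

theorem IsUnit.add_of_norm_inverse_mul_lt_one {R : Type*} [NormedRing R] [CompleteSpace R]
    {B T : R} (hB : IsUnit B) (hT : ‖Ring.inverse B‖ * ‖T‖ < 1) : IsUnit (B + T) := by
  have hw : ‖-(Ring.inverse B * T)‖ < 1 := by
    rw [norm_neg]; exact (norm_mul_le _ _).trans_lt hT
  have hfactor : B + T = B * (1 - -(Ring.inverse B * T)) := by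
    rw [sub_neg_eq_add, mul_add, mul_one, ← mul_assoc, Ring.mul_inverse_cancel B hB, one_mul]
  rw [hfactor]
  exact hB.mul (isUnit_one_sub_of_norm_lt_one hw)

theorem norm_inverse_add_le {R : Type*} [NormedRing R] {B T : R} {d : ℝ}
    (hB : IsUnit B) (hBT : IsUnit (B + T)) (hBd : ‖Ring.inverse B‖ ≤ d⁻¹) (hT : ‖T‖ < d) :
    ‖Ring.inverse (B + T)‖ ≤ (d - ‖T‖)⁻¹ := by
  have hd : 0 < d := (norm_nonneg T).trans_lt hT
  set X := Ring.inverse (B + T)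
  have hX : X = Ring.inverse B - Ring.inverse B * T * X := by
    have := Ring.inverse_sub_inverse (iff_of_true hB hBT)
    rw [add_sub_cancel_left] at this
    rw [← this, sub_sub_cancel]
  have hXd : d * ‖X‖ ≤ 1 + ‖T‖ * ‖X‖ := by
    rw [← le_inv_mul_iff₀ hd]
    calc ‖X‖ ≤ ‖Ring.inverse B‖ * (1 + ‖T‖ * ‖X‖) := by
          conv_lhs => rw [hX]
          refine (norm_sub_le _ _).trans ?_
          nlinarith [norm_mul₃_le (a := Ring.inverse B) (b := T) (c := X)]
      _ ≤ d⁻¹ * (1 + ‖T‖ * ‖X‖) := by gcongr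
  rw [← one_div, le_div_iff₀ (sub_pos.2 hT)]
  linarith

theorem ContinuousOn.ringInverse {α R : Type*} [TopologicalSpace α] [NormedRing R]
    [CompleteSpace R] {f : α → R} {s : Set α} (hf : ContinuousOn f s)
    (hu : ∀ x ∈ s, IsUnit (f x)) : ContinuousOn (fun x => Ring.inverse (f x)) s := fun x hx =>
  ((hu x hx).unit_spec ▸ NormedRing.inverse_continuousAt (hu x hx).unit).comp_continuousWithinAt
    (hf x hx)

theorem isUnit_sub_smul_one_of_notMem_spectrum {𝕜 A : Type*} [CommRing 𝕜] [Ring A]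
    [Algebra 𝕜 A] {a : A} {z : 𝕜} (hz : z ∉ spectrum 𝕜 a) : IsUnit (a - z • 1) := by
  simpa [Algebra.algebraMap_eq_smul_one] using (spectrum.notMem_iff.mp hz).neg

theorem IsStarNormal.norm_inverse_sub_smul_one_le {A : Type*} [CStarAlgebra A] {a : A}
    [IsStarNormal a] {z : ℂ} {d : ℝ} (hd : 0 < d) (h : ∀ x ∈ spectrum ℂ a, d ≤ dist x z) :
    ‖Ring.inverse (a - z • 1)‖ ≤ d⁻¹ := by
  have hz : ∀ x ∈ spectrum ℂ a, x - z ≠ 0 := fun x hx h0 => by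
    have := h x hx
    rw [dist_eq_norm, h0, norm_zero] at this
    linarith
  rw [← Algebra.algebraMap_eq_smul_one, ← cfc_id' ℂ a, ← cfc_const z a, ← cfc_sub ..,
    ← cfc_inv _ a hz]
  refine norm_cfc_le (by positivity) fun x hx => ?_
  rw [norm_inv, ← dist_eq_norm]
  exact inv_anti₀ hd (h x hx)

theorem IsClosed.exists_fixedPoint_of_mapsTo {α : Type*} [MetricSpace α] [CompleteSpace α]
    {f : α → α} {s : Set α} {k : NNReal} (hs : IsClosed s) (hne : s.Nonempty)
    (hsf : MapsTo f s s) (hk : k < 1) (hf : ∀ x ∈ s, ∀ y ∈ s, dist (f x) (f y) ≤ k * dist x y) :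
    ∃ x ∈ s, f x = x := by
  obtain ⟨x, hx⟩ := hne
  have hcontr : ContractingWith k (hsf.restrict f s s) :=
    ⟨hk, LipschitzWith.of_dist_le_mul fun x y => hf x x.2 y y.2⟩
  obtain ⟨y, hy, hfy, -⟩ := hcontr.exists_fixedPoint' hs.isComplete hsf hx (edist_ne_top _ _)
  exact ⟨y, hy, hfy⟩

theorem intervalIntegral.norm_integral_smul_mul_le {R : Type*} [NormedRing R] [NormedAlgebra ℂ R]
    {a b M : ℝ} {c : ℝ → ℂ} {G f : ℝ → R} (hab : a ≤ b)
    (hcG : IntervalIntegrable (fun t => ‖G t‖ * ‖c t‖) volume a b)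
    (hf : ∀ t ∈ Icc a b, ‖f t‖ ≤ M) :
    ‖∫ t in a..b, c t • (G t * f t)‖ ≤ M * ∫ t in a..b, ‖G t‖ * ‖c t‖ := by
  rw [mul_comm, ← intervalIntegral.integral_mul_const]
  refine intervalIntegral.norm_integral_le_of_norm_le hab (ae_of_all _ fun t ht => ?_)
    (hcG.mul_const M)
  calc ‖c t • (G t * f t)‖ ≤ ‖c t‖ * (‖G t‖ * ‖f t‖) := by
        rw [norm_smul]; gcongr; exact norm_mul_le _ _
    _ ≤ ‖G t‖ * ‖c t‖ * M := by
        rw [mul_left_comm, ← mul_assoc]; gcongr; exact hf t (Ioc_subset_Icc_self ht)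

namespace OperatorRoot

variable {R : Type*} [NormedRing R] [NormedAlgebra ℂ R]

noncomputable def rootMap (a : R) (γ c : ℝ → ℂ) (G : ℝ → R) (T : R) : R :=
  -∫ t in (0 : ℝ)..1, c t • (G t * Ring.inverse (a + T - γ t • 1))

variable {a : R} {γ c : ℝ → ℂ} {G : ℝ → R} {d V : ℝ}

theorem isUnit_and_norm_inverse_le [CompleteSpace R] {T : R}
    (hu : ∀ t ∈ Icc (0 : ℝ) 1, IsUnit (a - γ t • 1))
    (hd : ∀ t ∈ Icc (0 : ℝ) 1, ‖Ring.inverse (a - γ t • 1)‖ ≤ d⁻¹) (hT : ‖T‖ < d) :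
    ∀ t ∈ Icc (0 : ℝ) 1, IsUnit (a + T - γ t • 1) ∧
      ‖Ring.inverse (a + T - γ t • 1)‖ ≤ (d - ‖T‖)⁻¹ := by
  intro t ht
  have hdpos : 0 < d := (norm_nonneg T).trans_lt hT
  rw [add_sub_right_comm]
  have hunit : IsUnit (a - γ t • 1 + T) := (hu t ht).add_of_norm_inverse_mul_lt_one <|
    calc ‖Ring.inverse (a - γ t • 1)‖ * ‖T‖ ≤ d⁻¹ * ‖T‖ := by gcongr; exact hd t ht
      _ < 1 := by rwa [inv_mul_lt_one₀ hdpos]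
  exact ⟨hunit, norm_inverse_add_le (hu t ht) hunit (hd t ht) hT⟩

theorem intervalIntegrable_rootMap_integrand [CompleteSpace R] {T : R}
    (hγ : ContinuousOn γ (Icc 0 1)) (hc : ContinuousOn c (Icc 0 1)) (hG : ContinuousOn G (Icc 0 1))
    (hu : ∀ t ∈ Icc (0 : ℝ) 1, IsUnit (a + T - γ t • 1)) :
    IntervalIntegrable (fun t => c t • (G t * Ring.inverse (a + T - γ t • 1))) volume 0 1 :=
  (hc.smul (hG.mul (ContinuousOn.ringInverse (by fun_prop) hu))).intervalIntegrable_of_Icc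
    zero_le_one

theorem norm_rootMap_le {T : R} {M : ℝ} (hc : ContinuousOn c (Icc 0 1))
    (hG : ContinuousOn G (Icc 0 1)) (hV : ∫ t in (0 : ℝ)..1, ‖G t‖ * ‖c t‖ ≤ V) (hM : 0 ≤ M)
    (hb : ∀ t ∈ Icc (0 : ℝ) 1, ‖Ring.inverse (a + T - γ t • 1)‖ ≤ M) :
    ‖rootMap a γ c G T‖ ≤ M * V := by
  rw [rootMap, norm_neg]
  refine (intervalIntegral.norm_integral_smul_mul_le zero_le_one ?_ hb).trans (by gcongr)
  exact (hG.norm.mul hc.norm).intervalIntegrable_of_Icc zero_le_one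

theorem norm_rootMap_sub_le [CompleteSpace R] {T₁ T₂ : R} {M₁ M₂ : ℝ}
    (hγ : ContinuousOn γ (Icc 0 1)) (hc : ContinuousOn c (Icc 0 1)) (hG : ContinuousOn G (Icc 0 1))
    (hV : ∫ t in (0 : ℝ)..1, ‖G t‖ * ‖c t‖ ≤ V) (hM₁ : 0 ≤ M₁) (hM₂ : 0 ≤ M₂)
    (hu₁ : ∀ t ∈ Icc (0 : ℝ) 1, IsUnit (a + T₁ - γ t • 1))
    (hu₂ : ∀ t ∈ Icc (0 : ℝ) 1, IsUnit (a + T₂ - γ t • 1))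
    (hb₁ : ∀ t ∈ Icc (0 : ℝ) 1, ‖Ring.inverse (a + T₁ - γ t • 1)‖ ≤ M₁)
    (hb₂ : ∀ t ∈ Icc (0 : ℝ) 1, ‖Ring.inverse (a + T₂ - γ t • 1)‖ ≤ M₂) :
    ‖rootMap a γ c G T₁ - rootMap a γ c G T₂‖ ≤ M₂ * M₁ * V * ‖T₁ - T₂‖ := by
  have hdiff : rootMap a γ c G T₁ - rootMap a γ c G T₂ = ∫ t in (0 : ℝ)..1, c t • (G t *
      (Ring.inverse (a + T₂ - γ t • 1) * (T₁ - T₂) * Ring.inverse (a + T₁ - γ t • 1))) := by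
    rw [rootMap, rootMap, neg_sub_neg, ← intervalIntegral.integral_sub
      (intervalIntegrable_rootMap_integrand hγ hc hG hu₂)
      (intervalIntegrable_rootMap_integrand hγ hc hG hu₁)]
    refine intervalIntegral.integral_congr fun t ht => ?_
    rw [uIcc_of_le zero_le_one] at ht
    simp only [← smul_sub, ← mul_sub]
    rw [Ring.inverse_sub_inverse (iff_of_true (hu₂ t ht) (hu₁ t ht))]
    rw [show a + T₁ - γ t • 1 - (a + T₂ - γ t • 1) = T₁ - T₂ by abel]
  have hbound : ∀ t ∈ Icc (0 : ℝ) 1, ‖Ring.inverse (a + T₂ - γ t • 1) * (T₁ - T₂) *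
      Ring.inverse (a + T₁ - γ t • 1)‖ ≤ M₂ * ‖T₁ - T₂‖ * M₁ := fun t ht =>
    (norm_mul₃_le ..).trans (by gcongr <;> simp_all)
  calc _ ≤ M₂ * ‖T₁ - T₂‖ * M₁ * ∫ t in (0 : ℝ)..1, ‖G t‖ * ‖c t‖ := by
        rw [hdiff]
        exact intervalIntegral.norm_integral_smul_mul_le zero_le_one
          ((hG.norm.mul hc.norm).intervalIntegrable_of_Icc zero_le_one) hbound
    _ ≤ M₂ * M₁ * V * ‖T₁ - T₂‖ := by
        rw [mul_right_comm _ ‖T₁ - T₂‖, mul_right_comm _ ‖T₁ - T₂‖]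
        gcongr

theorem exists_rootMap_eq_self [CompleteSpace R] {r : ℝ} (hγ : ContinuousOn γ (Icc 0 1))
    (hc : ContinuousOn c (Icc 0 1)) (hG : ContinuousOn G (Icc 0 1))
    (hV : ∫ t in (0 : ℝ)..1, ‖G t‖ * ‖c t‖ ≤ V)
    (hu : ∀ t ∈ Icc (0 : ℝ) 1, IsUnit (a - γ t • 1))
    (hd : ∀ t ∈ Icc (0 : ℝ) 1, ‖Ring.inverse (a - γ t • 1)‖ ≤ d⁻¹)
    (hr : 0 ≤ r) (h2r : 2 * r < d) (hVr : V ≤ r * (d - r)) :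
    ∃ T, ‖T‖ ≤ r ∧ rootMap a γ c G T = T := by
  have hdr : 0 < d - r := by linarith
  have hball : ∀ T ∈ Metric.closedBall (0 : R) r,
      (∀ t ∈ Icc (0 : ℝ) 1, IsUnit (a + T - γ t • 1)) ∧
        ∀ t ∈ Icc (0 : ℝ) 1, ‖Ring.inverse (a + T - γ t • 1)‖ ≤ (d - r)⁻¹ := by
    intro T hT
    rw [mem_closedBall_zero_iff] at hT
    have hTd := isUnit_and_norm_inverse_le hu hd (hT.trans_lt (by linarith))
    exact ⟨fun t ht => (hTd t ht).1, fun t ht => (hTd t ht).2.trans (by gcongr)⟩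
  have hmaps : MapsTo (rootMap a γ c G) (Metric.closedBall 0 r) (Metric.closedBall 0 r) := by
    intro T hT
    rw [mem_closedBall_zero_iff]
    calc _ ≤ (d - r)⁻¹ * V := norm_rootMap_le hc hG hV (by positivity) (hball T hT).2
      _ ≤ r := by rw [inv_mul_le_iff₀ hdr]; linarith
  have hk : (d - r)⁻¹ * (d - r)⁻¹ * V < 1 := by
    rw [← mul_inv, inv_mul_lt_iff₀ (by positivity), mul_one]
    nlinarith
  obtain ⟨T, hT, hfix⟩ := Metric.isClosed_closedBall.exists_fixedPoint_of_mapsTo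
    ⟨0, Metric.mem_closedBall_self hr⟩ hmaps (Real.toNNReal_lt_one.2 hk) fun T₁ h₁ T₂ h₂ => by
      rw [dist_eq_norm, dist_eq_norm]
      refine (norm_rootMap_sub_le hγ hc hG hV (by positivity) (by positivity) (hball T₁ h₁).1
        (hball T₂ h₂).1 (hball T₁ h₁).2 (hball T₂ h₂).2).trans ?_
      gcongr
      exact Real.le_coe_toNNReal _
  exact ⟨T, mem_closedBall_zero_iff.1 hT, hfix⟩

theorem rootMap_eq_self_unique [CompleteSpace R] {r : ℝ} {T T' : R} (hγ : ContinuousOn γ (Icc 0 1))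
    (hc : ContinuousOn c (Icc 0 1)) (hG : ContinuousOn G (Icc 0 1))
    (hV : ∫ t in (0 : ℝ)..1, ‖G t‖ * ‖c t‖ ≤ V)
    (hu : ∀ t ∈ Icc (0 : ℝ) 1, IsUnit (a - γ t • 1))
    (hd : ∀ t ∈ Icc (0 : ℝ) 1, ‖Ring.inverse (a - γ t • 1)‖ ≤ d⁻¹)
    (h2r : 2 * r < d) (hVr : V ≤ r * (d - r)) (hT : ‖T‖ ≤ r) (hTfix : rootMap a γ c G T = T)
    (hT' : ‖T'‖ ≤ d - √V) (hu' : ∀ t ∈ Icc (0 : ℝ) 1, IsUnit (a + T' - γ t • 1))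
    (hT'fix : rootMap a γ c G T' = T') : T' = T := by
  have hV0 : 0 ≤ V :=
    (intervalIntegral.integral_nonneg zero_le_one fun t _ => by positivity).trans hV
  have hr : 0 ≤ r := (norm_nonneg T).trans hT
  have hsqrtV : √V < d - ‖T‖ := by
    rw [Real.sqrt_lt' (by linarith)]
    nlinarith
  have hT'd : ‖T'‖ < d := by
    by_contra! hdT'
    have hV' : V = 0 := le_antisymm (Real.sqrt_eq_zero'.1 (by linarith [Real.sqrt_nonneg V])) hV0
    obtain ⟨M, hM⟩ := isCompact_Icc.exists_bound_of_continuousOn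
      (ContinuousOn.ringInverse (by fun_prop) hu')
    have := norm_rootMap_le hc hG hV (le_max_right M 0) fun t ht => (hM t ht).trans (le_max_left ..)
    rw [hT'fix, hV', mul_zero] at this
    linarith
  have hb := isUnit_and_norm_inverse_le hu hd (hT.trans_lt (by linarith))
  have hb' := isUnit_and_norm_inverse_le hu hd hT'd
  have key := norm_rootMap_sub_le hγ hc hG hV (by simp [hT'd.le]) (by simp; linarith)
    (fun t ht => (hb' t ht).1) (fun t ht => (hb t ht).1) (fun t ht => (hb' t ht).2)
    (fun t ht => (hb t ht).2)
  rw [hT'fix, hTfix] at key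
  have hκ : (d - ‖T‖)⁻¹ * (d - ‖T'‖)⁻¹ * V < 1 := by
    rw [← mul_inv, inv_mul_lt_iff₀ (by nlinarith), mul_one]
    nlinarith [Real.sq_sqrt hV0, Real.sqrt_nonneg V]
  have : ‖T' - T‖ ≤ 0 := by nlinarith [norm_nonneg (T' - T)]
  exact sub_eq_zero.1 (norm_le_zero_iff.1 this)

end OperatorRoot

open OperatorRoot

open intervalIntegral in
/-- Existence and uniqueness of the operator root `Z = A + T` of the basic equation
`Z = A − ∫₀¹ F(γ(t)) (Z − γ(t))⁻¹ γ'(t) dt`, provided `d := dist(σ(A), γ([0,1])) > 0` and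
`V := ∫₀¹ ‖F(γ(t))‖ |γ'(t)| dt < d²/4`. The solution satisfies
`‖T‖ ≤ d/2 − √(d²/4 − V)` and is unique among solutions `T'` with `‖T'‖ ≤ d − √V`. -/
theorem operator_root_exists_unique {H : Type*}
    [NormedAddCommGroup H] [InnerProductSpace ℂ H] [CompleteSpace H]
    (A : H →L[ℂ] H) (hA : IsSelfAdjoint A)
    (γ γ' : ℝ → ℂ)
    (hγ : ∀ t ∈ Set.Icc (0 : ℝ) 1, HasDerivAt γ (γ' t) t)
    (hγ' : ContinuousOn γ' (Set.Icc (0 : ℝ) 1))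
    (F : ℂ → H →L[ℂ] H) (hF : ContinuousOn F (γ '' Set.Icc (0 : ℝ) 1))
    (d V : ℝ)
    (hd : d = sInf (Set.image2 dist (spectrum ℂ A) (γ '' Set.Icc (0 : ℝ) 1)))
    (hV : V = ∫ t in (0 : ℝ)..1, ‖F (γ t)‖ * ‖γ' t‖)
    (hdpos : 0 < d) (hVd : V < d ^ 2 / 4) :
    ∃ T : H →L[ℂ] H,
      ‖T‖ ≤ d / 2 - Real.sqrt (d ^ 2 / 4 - V) ∧
      (∀ t ∈ Set.Icc (0 : ℝ) 1, IsUnit (A + T - γ t • (1 : H →L[ℂ] H))) ∧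
      A + T =
        A - ∫ t in (0 : ℝ)..1,
          γ' t • (F (γ t) * Ring.inverse (A + T - γ t • (1 : H →L[ℂ] H))) ∧
      ∀ T' : H →L[ℂ] H, ‖T'‖ ≤ d - Real.sqrt V →
        (∀ t ∈ Set.Icc (0 : ℝ) 1, IsUnit (A + T' - γ t • (1 : H →L[ℂ] H))) →
        A + T' =
          A - ∫ t in (0 : ℝ)..1,
            γ' t • (F (γ t) * Ring.inverse (A + T' - γ t • (1 : H →L[ℂ] H))) →
        T' = T := by
  have hspec : ∀ t ∈ Icc (0 : ℝ) 1, ∀ x ∈ spectrum ℂ A, d ≤ dist x (γ t) := fun t ht x hx =>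
    hd ▸ csInf_le ⟨0, by rintro _ ⟨_, -, _, -, rfl⟩; exact dist_nonneg⟩
      (mem_image2_of_mem hx (mem_image_of_mem γ ht))
  have hu : ∀ t ∈ Icc (0 : ℝ) 1, IsUnit (A - γ t • 1) := fun t ht =>
    isUnit_sub_smul_one_of_notMem_spectrum fun h => by linarith [hspec t ht _ h, dist_self (γ t)]
  have : IsStarNormal A := hA.isStarNormal
  have hres t (ht : t ∈ Icc (0 : ℝ) 1) :=
    IsStarNormal.norm_inverse_sub_smul_one_le hdpos (hspec t ht)
  have hγc : ContinuousOn γ (Icc 0 1) := fun t ht => (hγ t ht).continuousAt.continuousWithinAt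
  have hFγ : ContinuousOn (fun t => F (γ t)) (Icc 0 1) := hF.comp hγc (mapsTo_image γ _)
  have hV0 : 0 ≤ V := hV ▸ intervalIntegral.integral_nonneg zero_le_one fun t _ => by positivity
  have hs : √(d ^ 2 / 4 - V) ^ 2 = d ^ 2 / 4 - V := Real.sq_sqrt (by linarith)
  have hs0 : 0 < √(d ^ 2 / 4 - V) := Real.sqrt_pos.2 (by linarith)
  set s := √(d ^ 2 / 4 - V)
  have hr : 0 ≤ d / 2 - s := by nlinarith
  have h2r : 2 * (d / 2 - s) < d := by linarith
  have hVr : V ≤ (d / 2 - s) * (d - (d / 2 - s)) := by nlinarith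
  obtain ⟨T, hT, hfix⟩ := exists_rootMap_eq_self hγc hγ' hFγ hV.ge hu hres hr h2r hVr
  have hTu := isUnit_and_norm_inverse_le hu hres (by linarith : ‖T‖ < d)
  refine ⟨T, hT, fun t ht => (hTu t ht).1, ?_, fun T' hT' hu' heq => ?_⟩
  · rw [sub_eq_add_neg]
    exact congrArg (A + ·) hfix.symm
  · exact rootMap_eq_self_unique hγc hγ' hFγ hV.ge hu hres h2r hVr hT hfix hT' hu'
      (add_left_cancel (heq.trans (sub_eq_add_neg _ _))).symm
end

section
/- Let Z := A + T, where T is the unique solution with ‖T‖ ≤ d/2 − √(d²/4 − V) of the equation Z = A − ∫₀¹ F(γ(t)) (Z − γ(t))^{-1} γ'(t) dt, and for z ∈ ℂ \ γ([0,1]) let W(z) := I − ∫₀¹ F(γ(t)) (γ(t) − z)^{-1} (Z − γ(t))^{-1} γ'(t) dt. If z satisfies dist(z, σ(A)) ≤ d/2 (and z ∉ γ([0,1])), then W(z) is boundedly invertible and ‖W(z)^{-1}‖ ≤ (1 − V/(d²/4))^{-1}. -/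
/-!
The resolvent of the self-adjoint `A` at a point `w` of the curve has norm at most
`1 / dist(w, σ(A)) ≤ 1 / d`, because for normal elements of a C⋆-algebra the norm equals the
spectral radius. Since `‖T‖ ≤ d / 2`, a Neumann series shows that `A + T − w` stays invertible
with inverse of norm at most `2 / d`. For `dist(z, σ(A)) ≤ d / 2` the points of the curve are at
distance at least `d / 2` from `z`, so the integrand of `I − W(z)` is bounded by
`‖F(γ t)‖ ‖γ' t‖ / (d² / 4)`, the integral has norm at most `V / (d² / 4) < 1`, and a second
Neumann series inverts `W(z)` with the stated bound.
-/

theorem isUnit_one_sub_and_norm_inverse_le {R : Type*} [NormedRing R] [NormOneClass R]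
    [CompleteSpace R] {x : R} {r : ℝ} (hx : ‖x‖ ≤ r) (hr : r < 1) :
    IsUnit (1 - x) ∧ ‖Ring.inverse (1 - x)‖ ≤ (1 - r)⁻¹ := by
  have hx1 : ‖x‖ < 1 := hx.trans_lt hr
  refine ⟨isUnit_one_sub_of_norm_lt_one hx1, ?_⟩
  calc ‖Ring.inverse (1 - x)‖ = ‖∑' n : ℕ, x ^ n‖ := by
        rw [NormedRing.inverse_one_sub x hx1]; rfl
    _ ≤ (1 - ‖x‖)⁻¹ := by simpa using tsum_geometric_le_of_norm_lt_one x hx1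
    _ ≤ (1 - r)⁻¹ := inv_anti₀ (by linarith) (by linarith)

theorem IsUnit.isUnit_add_and_norm_inverse_le {R : Type*} [NormedRing R] [NormOneClass R]
    [CompleteSpace R] {u : R} (hu : IsUnit u) (t : R) (h : ‖Ring.inverse u‖ * ‖t‖ < 1) :
    IsUnit (u + t) ∧
      ‖Ring.inverse (u + t)‖ ≤ ‖Ring.inverse u‖ / (1 - ‖Ring.inverse u‖ * ‖t‖) := by
  have hfactor : u + t = u * (1 - -(Ring.inverse u * t)) := by
    rw [sub_neg_eq_add, mul_add, mul_one, Ring.mul_inverse_cancel_left u t hu]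
  obtain ⟨hunit, hnorm⟩ :=
    isUnit_one_sub_and_norm_inverse_le (x := -(Ring.inverse u * t))
      ((norm_neg _).trans_le (norm_mul_le _ _)) h
  refine ⟨hfactor ▸ hu.mul hunit, ?_⟩
  rw [hfactor, Ring.inverse_mul (.inl hu), div_eq_mul_inv, mul_comm ‖Ring.inverse u‖]
  exact (norm_mul_le _ _).trans (by gcongr)

instance IsStarNormal.sub_algebraMap {R A : Type*} [CommSemiring R] [StarRing R] [Ring A]
    [StarRing A] [Algebra R A] [StarModule R A] (a : A) [IsStarNormal a] (r : R) :
    IsStarNormal (a - algebraMap R A r) :=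
  have : IsStarNormal (algebraMap R A r) := ⟨Algebra.commute_algebraMap_right r _⟩
  Commute.isStarNormal_sub <| by
    rw [← algebraMap_star_comm]
    exact Algebra.commute_algebraMap_right _ _

theorem IsStarNormal.isUnit_sub_algebraMap_and_norm_inverse_le {A : Type*} [CStarAlgebra A]
    {a : A} [IsStarNormal a] {w : ℂ} {r : ℝ} (hr : 0 < r)
    (h : ∀ μ ∈ spectrum ℂ a, r ≤ dist μ w) :
    IsUnit (a - algebraMap ℂ A w) ∧ ‖Ring.inverse (a - algebraMap ℂ A w)‖ ≤ r⁻¹ := by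
  have hw : w ∉ spectrum ℂ a := fun hw => by simpa using hr.trans_le (h w hw)
  obtain ⟨u, hu⟩ : IsUnit (a - algebraMap ℂ A w) := by
    simpa using (spectrum.notMem_iff.mp hw).neg
  refine ⟨hu ▸ u.isUnit, ?_⟩
  have : IsStarNormal (u : A) := hu ▸ inferInstance
  have hspec : ∀ k ∈ spectrum ℂ (↑u⁻¹ : A), ‖k‖ ≤ r⁻¹ := by
    intro k hk
    rw [← spectrum.map_inv, Set.mem_inv, hu, ← spectrum.sub_singleton_eq] at hk
    obtain ⟨μ, hμ, _, rfl, hkμ⟩ := hk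
    rw [← inv_inv k, norm_inv, ← hkμ, ← dist_eq_norm]
    exact inv_anti₀ hr (h μ hμ)
  rw [← hu, Ring.inverse_unit, ← coe_nnnorm, ← Real.toNNReal_le_toNNReal_iff (by positivity),
    Real.toNNReal_coe, ← ENNReal.coe_le_coe, ← IsStarNormal.spectralRadius_eq_nnnorm]
  refine iSup₂_le fun k hk => ?_
  rw [ENNReal.coe_le_coe, Real.le_toNNReal_iff_coe_le (by positivity)]
  exact hspec k hk

theorem IsStarNormal.norm_inverse_add_sub_algebraMap_le {A : Type*} [CStarAlgebra A]
    {a : A} [IsStarNormal a] {w : ℂ} {r : ℝ} (hr : 0 < r)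
    (h : ∀ μ ∈ spectrum ℂ a, r ≤ dist μ w) {t : A} (ht : ‖t‖ ≤ r / 2) :
    ‖Ring.inverse (a + t - algebraMap ℂ A w)‖ ≤ 2 / r := by
  rcases subsingleton_or_nontrivial A with hA | hA
  · rw [Subsingleton.elim (Ring.inverse _) 0, norm_zero]
    positivity
  obtain ⟨hu, hres⟩ := isUnit_sub_algebraMap_and_norm_inverse_le hr h
  have hsmall : ‖Ring.inverse (a - algebraMap ℂ A w)‖ * ‖t‖ ≤ 1 / 2 :=
    calc _ ≤ r⁻¹ * (r / 2) := by gcongr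
      _ = 1 / 2 := by field_simp
  rw [add_sub_right_comm]
  calc _ ≤ _ := (hu.isUnit_add_and_norm_inverse_le t (by linarith)).2
    _ ≤ r⁻¹ / (1 - 1 / 2) := by gcongr
    _ = 2 / r := by field_simp; norm_num

theorem sInf_image2_dist_le {α : Type*} [PseudoMetricSpace α] {s t : Set α} {x y : α}
    (hx : x ∈ s) (hy : y ∈ t) : sInf (Set.image2 dist s t) ≤ dist x y :=
  csInf_le ⟨0, by rintro _ ⟨_, _, _, _, rfl⟩; exact dist_nonneg⟩ (Set.mem_image2_of_mem hx hy)

theorem le_dist_add_infDist {α : Type*} [PseudoMetricSpace α] {s : Set α} {w : α} {r : ℝ}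
    (hs : s.Nonempty) (h : ∀ μ ∈ s, r ≤ dist μ w) (z : α) :
    r ≤ dist w z + Metric.infDist z s :=
  calc r ≤ Metric.infDist w s := (Metric.le_infDist hs).mpr fun μ hμ => dist_comm μ w ▸ h μ hμ
    _ ≤ Metric.infDist z s + dist w z := Metric.infDist_le_infDist_add_dist
    _ = dist w z + Metric.infDist z s := add_comm _ _

theorem norm_intervalIntegral_div_smul_mul_le {E : Type*} [NormedRing E] [NormedAlgebra ℂ E]
    {γ γ' : ℝ → ℂ} {z : ℂ} {X Y : ℝ → E} {M ρ : ℝ} (hρ : 0 < ρ)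
    (hX : IntervalIntegrable (fun t => ‖X t‖ * ‖γ' t‖) MeasureTheory.volume 0 1)
    (hY : ∀ t ∈ Set.Icc (0 : ℝ) 1, ‖Y t‖ ≤ M)
    (hgap : ∀ t ∈ Set.Icc (0 : ℝ) 1, ρ ≤ ‖γ t - z‖) :
    ‖∫ t in (0 : ℝ)..1, (γ' t / (γ t - z)) • (X t * Y t)‖ ≤
      M / ρ * ∫ t in (0 : ℝ)..1, ‖X t‖ * ‖γ' t‖ := by
  rw [← intervalIntegral.integral_const_mul]
  refine intervalIntegral.norm_integral_le_of_norm_le zero_le_one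
    (MeasureTheory.ae_of_all _ fun t ht => ?_) (hX.const_mul _)
  have ht : t ∈ Set.Icc (0 : ℝ) 1 := Set.Ioc_subset_Icc_self ht
  calc _ ≤ ‖γ' t‖ / ‖γ t - z‖ * (‖X t‖ * ‖Y t‖) := by
        rw [norm_smul, norm_div]
        gcongr
        exact norm_mul_le _ _
    _ ≤ ‖γ' t‖ / ρ * (‖X t‖ * M) := by
        gcongr
        exacts [hgap t ht, hY t ht]
    _ = _ := by ring

theorem continued_schur_factor_invertible_general {H : Type*}
    [NormedAddCommGroup H] [InnerProductSpace ℂ H] [CompleteSpace H]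
    (A : H →L[ℂ] H) (hA : IsSelfAdjoint A)
    (γ γ' : ℝ → ℂ)
    (hγ : ∀ t ∈ Set.Icc (0 : ℝ) 1, HasDerivAt γ (γ' t) t)
    (hγ' : ContinuousOn γ' (Set.Icc (0 : ℝ) 1))
    (F : ℂ → H →L[ℂ] H) (hF : ContinuousOn F (γ '' Set.Icc (0 : ℝ) 1))
    (d V : ℝ)
    (hd : d = sInf (Set.image2 dist (spectrum ℂ A) (γ '' Set.Icc (0 : ℝ) 1)))
    (hV : V = ∫ t in (0 : ℝ)..1, ‖F (γ t)‖ * ‖γ' t‖)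
    (hdpos : 0 < d) (hVd : V < d ^ 2 / 4)
    (T : H →L[ℂ] H)
    (hT : ‖T‖ ≤ d / 2 - Real.sqrt (d ^ 2 / 4 - V))
    (z : ℂ)
    (hzA : Metric.infDist z (spectrum ℂ A) ≤ d / 2) :
    IsUnit ((1 : H →L[ℂ] H) - ∫ t in (0 : ℝ)..1,
        (γ' t / (γ t - z)) •
          (F (γ t) * Ring.inverse (A + T - γ t • (1 : H →L[ℂ] H)))) ∧
      ‖Ring.inverse ((1 : H →L[ℂ] H) - ∫ t in (0 : ℝ)..1,
          (γ' t / (γ t - z)) •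
            (F (γ t) * Ring.inverse (A + T - γ t • (1 : H →L[ℂ] H))))‖ ≤
        (1 - V / (d ^ 2 / 4))⁻¹ := by
  have hcurve : ∀ t ∈ Set.Icc (0 : ℝ) 1, ∀ μ ∈ spectrum ℂ A, d ≤ dist μ (γ t) :=
    fun t ht μ hμ => hd ▸ sInf_image2_dist_le hμ (Set.mem_image_of_mem γ ht)
  have hspec : (spectrum ℂ A).Nonempty := Set.Nonempty.of_image2_left (f := dist) <|
    Set.nonempty_iff_ne_empty.mpr fun h => hdpos.ne' (by rw [hd, h, Real.sInf_empty])
  -- `NormOneClass (H →L[ℂ] H)`, needed for the Neumann series bounds, requires `Nontrivial H`.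
  have : Nontrivial H := not_subsingleton_iff_nontrivial.mp fun _ =>
    hspec.ne_empty (spectrum.of_subsingleton A)
  have : IsStarNormal A := hA.isStarNormal
  have hresolvent : ∀ t ∈ Set.Icc (0 : ℝ) 1,
      ‖Ring.inverse (A + T - γ t • (1 : H →L[ℂ] H))‖ ≤ 2 / d := fun t ht => by
    rw [← Algebra.algebraMap_eq_smul_one]
    exact IsStarNormal.norm_inverse_add_sub_algebraMap_le hdpos (hcurve t ht)
      (hT.trans (sub_le_self _ (Real.sqrt_nonneg _)))
  have hgap : ∀ t ∈ Set.Icc (0 : ℝ) 1, d / 2 ≤ ‖γ t - z‖ := fun t ht => by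
    have := le_dist_add_infDist hspec (hcurve t ht) z
    rw [dist_eq_norm] at this
    linarith
  have hint : IntervalIntegrable (fun t => ‖F (γ t)‖ * ‖γ' t‖) MeasureTheory.volume 0 1 := by
    have hγcont : ContinuousOn γ (Set.Icc 0 1) := fun t ht =>
      (hγ t ht).continuousAt.continuousWithinAt
    exact ContinuousOn.intervalIntegrable_of_Icc zero_le_one
      ((hF.comp hγcont (Set.mapsTo_image γ _)).norm.mul hγ'.norm)
  have hnorm : ‖∫ t in (0 : ℝ)..1, (γ' t / (γ t - z)) •
      (F (γ t) * Ring.inverse (A + T - γ t • (1 : H →L[ℂ] H)))‖ ≤ V / (d ^ 2 / 4) :=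
    calc _ ≤ 2 / d / (d / 2) * V :=
          hV ▸ norm_intervalIntegral_div_smul_mul_le (by positivity) hint hresolvent hgap
      _ = V / (d ^ 2 / 4) := by field_simp; ring
  exact isUnit_one_sub_and_norm_inverse_le hnorm ((div_lt_one (by positivity)).mpr hVd)

/-- Bounded invertibility of the factor `W(z)`: under the hypotheses of the factorization
theorem, if `z ∉ γ([0,1])` and `dist(z, σ(A)) ≤ d/2`, then
`W(z) = I − ∫₀¹ F(γ(t)) (γ(t) − z)⁻¹ (Z − γ(t))⁻¹ γ'(t) dt` is boundedly invertible and
`‖W(z)⁻¹‖ ≤ (1 − V/(d²/4))⁻¹`. -/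
theorem continued_schur_factor_invertible {H : Type*}
    [NormedAddCommGroup H] [InnerProductSpace ℂ H] [CompleteSpace H]
    (A : H →L[ℂ] H) (hA : IsSelfAdjoint A)
    (γ γ' : ℝ → ℂ)
    (hγ : ∀ t ∈ Set.Icc (0 : ℝ) 1, HasDerivAt γ (γ' t) t)
    (hγ' : ContinuousOn γ' (Set.Icc (0 : ℝ) 1))
    (F : ℂ → H →L[ℂ] H) (hF : ContinuousOn F (γ '' Set.Icc (0 : ℝ) 1))
    (d V : ℝ)
    (hd : d = sInf (Set.image2 dist (spectrum ℂ A) (γ '' Set.Icc (0 : ℝ) 1)))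
    (hV : V = ∫ t in (0 : ℝ)..1, ‖F (γ t)‖ * ‖γ' t‖)
    (hdpos : 0 < d) (hVd : V < d ^ 2 / 4)
    (T : H →L[ℂ] H)
    (hT : ‖T‖ ≤ d / 2 - Real.sqrt (d ^ 2 / 4 - V))
    (hTinv : ∀ t ∈ Set.Icc (0 : ℝ) 1, IsUnit (A + T - γ t • (1 : H →L[ℂ] H)))
    (hTeq : A + T =
      A - ∫ t in (0 : ℝ)..1,
        γ' t • (F (γ t) * Ring.inverse (A + T - γ t • (1 : H →L[ℂ] H))))
    (z : ℂ) (hz : z ∉ γ '' Set.Icc (0 : ℝ) 1)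
    (hzA : Metric.infDist z (spectrum ℂ A) ≤ d / 2) :
    IsUnit ((1 : H →L[ℂ] H) - ∫ t in (0 : ℝ)..1,
        (γ' t / (γ t - z)) •
          (F (γ t) * Ring.inverse (A + T - γ t • (1 : H →L[ℂ] H)))) ∧
      ‖Ring.inverse ((1 : H →L[ℂ] H) - ∫ t in (0 : ℝ)..1,
          (γ' t / (γ t - z)) •
            (F (γ t) * Ring.inverse (A + T - γ t • (1 : H →L[ℂ] H))))‖ ≤
        (1 - V / (d ^ 2 / 4))⁻¹ :=
  continued_schur_factor_invertible_general A hA γ γ' hγ hγ' F hF d V hd hV hdpos hVd T hT z hzA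
end
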